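/- Assume the DG mesh setup below with scalar (ℝ-valued) mesh functions u_h, v_h, w_h, real parameters α₁₁, α₁₃, α₃₃, β, and V : ℝ → ℝ continuously differentiable. Suppose that for every j ∈ {1,…,N}, every t ∈ ℝ, and every polynomial test function φ : I_j → ℝ of degree at most k: (a) −∫_{I_j} (∂_t v_h) φ dx − ∫_{I_j} w_h φ' dx + ŵ_{j+1/2} φ(x_{j+1/2}) − ŵ_{j−1/2} φ(x_{j−1/2}) = −∫_{I_j} V'(u_h) φ dx; (b) ∫_{I_j} (∂_t u_h) φ dx + v̂_{j+1/2} φ(x_{j+1/2}) − v̂_{j−1/2} φ(x_{j−1/2}) = ∫_{I_j} v_h φ dx; (c) ∫_{I_j} u_h φ' dx − û_{j+1/2} φ(x_{j+1/2}) + û_{j−1/2} φ(x_{j−1/2}) = −∫_{I_j} w_h φ dx; where at each interface ŵ = {w_h} + α₁₁[u_h] + α₁₃[w_h] − β ∂_t[v_h], v̂ = β ∂_t[u_h], and û = {u_h} − α₁₃[u_h] − α₃₃[w_h]. Then the discrete energy 𝓔_h(t) = Σ_j ∫_{I_j} ( (1/2)(v_h² + w_h²) − V(u_h) ) dx + (1/2)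 Σ_j ( α₁₁ [u_h]² − α₃₃ [w_h]² )_{j+1/2} is constant in time. -/

import Mathlib

open MeasureTheory

/-- `f : ℝ → ℝ` is (globally) a polynomial of degree at most `k`. -/
def IsPolyDegLE (k : ℕ) (f : ℝ → ℝ) : Prop :=
  ∃ p : Polynomial ℝ, p.natDegree ≤ k ∧ ∀ x : ℝ, f x = Polynomial.eval x p

/-- Index of the left interface of cell `j` (periodic, with `N` cells): the interface
`x_{j−1/2}` is interface number `(j + N − 1) % N` where interface `i` sits at node `i+1`. -/
def lidx (N j : ℕ) : ℕ := (j + N - 1) % N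

/-- Left trace `v⁻` of a scalar mesh function at interface `j` (at node `xs (j+1)`). -/
noncomputable def trLs (xs : ℕ → ℝ) (z : ℕ → ℝ → ℝ → ℝ) (j : ℕ) (t : ℝ) : ℝ :=
  z j t (xs (j + 1))

/-- Right trace `v⁺` of a scalar mesh function at interface `j`, periodic with `N`
cells: the value of cell `(j+1) % N` at its left endpoint. -/
noncomputable def trRs (N : ℕ) (xs : ℕ → ℝ) (z : ℕ → ℝ → ℝ → ℝ) (j : ℕ) (t : ℝ) : ℝ :=
  z ((j + 1) % N) t (xs ((j + 1) % N))

/-- Jump `[v] = v⁺ − v⁻` at interface `j`. -/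
noncomputable def jmps (N : ℕ) (xs : ℕ → ℝ) (z : ℕ → ℝ → ℝ → ℝ) (j : ℕ) (t : ℝ) : ℝ :=
  trRs N xs z j t - trLs xs z j t

/-- Average `{v} = (v⁺ + v⁻)/2` at interface `j`. -/
noncomputable def avgs (N : ℕ) (xs : ℕ → ℝ) (z : ℕ → ℝ → ℝ → ℝ) (j : ℕ) (t : ℝ) : ℝ :=
  (trRs N xs z j t + trLs xs z j t) / 2

/-- A scalar mesh function: in each cell, smooth in `t` and, for each `t`, a polynomial
of degree at most `k` in `x`. -/
def IsMeshFunS (N k : ℕ) (z : ℕ → ℝ → ℝ → ℝ) : Prop :=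
  (∀ j < N, ∀ t : ℝ, IsPolyDegLE k (fun x => z j t x)) ∧
  (∀ j < N, ∀ x : ℝ, ContDiff ℝ (⊤ : ℕ∞) (fun t => z j t x))

/-- Lagrange basis polynomials at nodes `0, 1, …, k`. -/
noncomputable def ell (k i : ℕ) : Polynomial ℝ :=
  Lagrange.basis (Finset.range (k+1)) (fun n : ℕ => (n : ℝ)) i

lemma injOn_natCast (k : ℕ) :
    Set.InjOn (fun n : ℕ => (n : ℝ)) (Finset.range (k+1)) := by
  intro a _ b _ h
  simpa using h

/-- Lagrange decomposition of a polynomial of degree ≤ k. -/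
lemma poly_decomp {k : ℕ} {f : ℝ → ℝ} (hf : IsPolyDegLE k f) (x : ℝ) :
    f x = ∑ i ∈ Finset.range (k+1), f (i : ℕ) * (ell k i).eval x := by
  obtain ⟨p, hdeg, hp⟩ := hf
  have hlt : p.degree < (Finset.range (k+1)).card := by
    rw [Finset.card_range]
    exact lt_of_le_of_lt p.degree_le_natDegree (by exact_mod_cast Nat.lt_succ_of_le hdeg)
  have := Lagrange.eq_interpolate (f := p) (injOn_natCast k) hlt
  calc f x = p.eval x := hp x
    _ = _ := by
        conv_lhs => rw [this]
        rw [Lagrange.interpolate_apply]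
        simp [ell, Polynomial.eval_finset_sum, hp]

lemma isPoly_sum_ell {k : ℕ} (c : ℕ → ℝ) :
    IsPolyDegLE k (fun x => ∑ i ∈ Finset.range (k+1), c i * (ell k i).eval x) := by
  refine ⟨∑ i ∈ Finset.range (k+1), Polynomial.C (c i) * ell k i, ?_, ?_⟩
  · refine (Polynomial.natDegree_sum_le _ _).trans ?_
    rw [Finset.fold_max_le]
    refine ⟨Nat.zero_le _, fun i hi => ?_⟩
    refine (Polynomial.natDegree_C_mul_le _ _).trans ?_
    rw [ell, Lagrange.natDegree_basis (injOn_natCast k) hi, Finset.card_range]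
    omega
  · intro x
    simp [Polynomial.eval_finset_sum]

lemma IsPolyDegLE.continuous {k : ℕ} {f : ℝ → ℝ} (hf : IsPolyDegLE k f) : Continuous f := by
  obtain ⟨p, -, hp⟩ := hf
  have : f = fun x => p.eval x := funext hp
  rw [this]; exact p.continuous

/-- Time derivative of a cell function. -/
noncomputable def tder (z : ℝ → ℝ → ℝ) (t x : ℝ) : ℝ := deriv (fun s => z s x) t

lemma tder_eq {k : ℕ} {z : ℝ → ℝ → ℝ} (hp : ∀ t, IsPolyDegLE k (z t))
    (hd : ∀ x : ℝ, Differentiable ℝ (fun t => z t x)) (t x : ℝ) :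
    tder z t x = ∑ i ∈ Finset.range (k+1),
      deriv (fun s => z s (i : ℕ)) t * (ell k i).eval x := by
  have hfe : (fun s => z s x) = fun s => ∑ i ∈ Finset.range (k+1),
      z s (i : ℕ) * (ell k i).eval x := funext fun s => poly_decomp (hp s) x
  rw [tder, hfe, deriv_fun_sum (fun i _ => ((hd (i:ℕ)).mul_const _).differentiableAt)]
  refine Finset.sum_congr rfl fun i _ => ?_
  rw [deriv_mul_const ((hd (i:ℕ)).differentiableAt)]

lemma isPoly_tder {k : ℕ} {z : ℝ → ℝ → ℝ} (hp : ∀ t, IsPolyDegLE k (z t))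
    (hd : ∀ x : ℝ, Differentiable ℝ (fun t => z t x)) (t : ℝ) :
    IsPolyDegLE k (tder z t) := by
  have : tder z t = fun x => ∑ i ∈ Finset.range (k+1),
      deriv (fun s => z s (i : ℕ)) t * (ell k i).eval x := funext (tder_eq hp hd t)
  rw [this]; exact isPoly_sum_ell _

lemma integral_decomp {k : ℕ} {f : ℝ → ℝ} (hf : IsPolyDegLE k f)
    {φ : ℝ → ℝ} (hφ : Continuous φ) (a b : ℝ) :
    ∫ x in a..b, f x * φ x = ∑ i ∈ Finset.range (k+1),
      f (i : ℕ) * ∫ x in a..b, (ell k i).eval x * φ x := by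
  calc ∫ x in a..b, f x * φ x
      = ∫ x in a..b, ∑ i ∈ Finset.range (k+1), f (i:ℕ) * ((ell k i).eval x * φ x) := by
        apply intervalIntegral.integral_congr
        intro x _
        show f x * φ x = _
        rw [poly_decomp hf x, Finset.sum_mul]
        exact Finset.sum_congr rfl fun i _ => mul_assoc _ _ _
    _ = ∑ i ∈ Finset.range (k+1), ∫ x in a..b, f (i:ℕ) * ((ell k i).eval x * φ x) := by
        refine intervalIntegral.integral_finset_sum fun i _ => ?_
        exact (continuous_const.mul (((ell k i).continuous).mul hφ)).intervalIntegrable _ _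
    _ = _ := by
        refine Finset.sum_congr rfl fun i _ => ?_
        rw [intervalIntegral.integral_const_mul]

lemma hasDerivAt_integral_mul_right {k : ℕ} {z : ℝ → ℝ → ℝ}
    (hp : ∀ t, IsPolyDegLE k (z t)) (hd : ∀ x : ℝ, Differentiable ℝ (fun t => z t x))
    {φ : ℝ → ℝ} (hφ : Continuous φ) (a b t : ℝ) :
    HasDerivAt (fun s => ∫ x in a..b, z s x * φ x)
      (∫ x in a..b, tder z t x * φ x) t := by
  have h1 : (fun s => ∫ x in a..b, z s x * φ x)
      = fun s => ∑ i ∈ Finset.range (k+1),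
          z s (i:ℕ) * ∫ x in a..b, (ell k i).eval x * φ x :=
    funext fun s => integral_decomp (hp s) hφ a b
  have h2 : (∫ x in a..b, tder z t x * φ x)
      = ∑ i ∈ Finset.range (k+1),
          tder z t (i:ℕ) * ∫ x in a..b, (ell k i).eval x * φ x :=
    integral_decomp (isPoly_tder hp hd t) hφ a b
  rw [h1, h2]
  exact HasDerivAt.fun_sum fun i _ => ((hd (i:ℕ) t).hasDerivAt).mul_const _

lemma integral_decomp₂ {k : ℕ} {f g : ℝ → ℝ} (hf : IsPolyDegLE k f) (hg : IsPolyDegLE k g)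
    (a b : ℝ) :
    ∫ x in a..b, f x * g x = ∑ i ∈ Finset.range (k+1), ∑ j ∈ Finset.range (k+1),
      f (i : ℕ) * (g (j : ℕ) * ∫ x in a..b, (ell k j).eval x * (ell k i).eval x) := by
  rw [integral_decomp hf hg.continuous a b]
  refine Finset.sum_congr rfl fun i _ => ?_
  rw [← Finset.mul_sum]
  congr 1
  calc (∫ x in a..b, (ell k i).eval x * g x) = ∫ x in a..b, g x * (ell k i).eval x := by
        apply intervalIntegral.integral_congr; intro x _
        show (ell k i).eval x * g x = _; ring
    _ = _ := integral_decomp hg (ell k i).continuous a b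

lemma hasDerivAt_integral_mul₂ {k : ℕ} {z1 z2 : ℝ → ℝ → ℝ}
    (hp1 : ∀ t, IsPolyDegLE k (z1 t)) (hd1 : ∀ x : ℝ, Differentiable ℝ (fun t => z1 t x))
    (hp2 : ∀ t, IsPolyDegLE k (z2 t)) (hd2 : ∀ x : ℝ, Differentiable ℝ (fun t => z2 t x))
    (a b t : ℝ) :
    HasDerivAt (fun s => ∫ x in a..b, z1 s x * z2 s x)
      (∫ x in a..b, (tder z1 t x * z2 t x + z1 t x * tder z2 t x)) t := by
  have h1 : (fun s => ∫ x in a..b, z1 s x * z2 s x)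
      = fun s => ∑ i ∈ Finset.range (k+1), ∑ j ∈ Finset.range (k+1),
          z1 s (i:ℕ) * (z2 s (j:ℕ) * ∫ x in a..b, (ell k j).eval x * (ell k i).eval x) :=
    funext fun s => integral_decomp₂ (hp1 s) (hp2 s) a b
  have h2 : (∫ x in a..b, (tder z1 t x * z2 t x + z1 t x * tder z2 t x))
      = ∑ i ∈ Finset.range (k+1), ∑ j ∈ Finset.range (k+1),
          (tder z1 t (i:ℕ) * (z2 t (j:ℕ) * ∫ x in a..b, (ell k j).eval x * (ell k i).eval x)
           + z1 t (i:ℕ) * (tder z2 t (j:ℕ) * ∫ x in a..b, (ell k j).eval x * (ell k i).eval x)) := by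
    rw [intervalIntegral.integral_add (f := fun x => tder z1 t x * z2 t x)
      (g := fun x => z1 t x * tder z2 t x)
      (((isPoly_tder hp1 hd1 t).continuous.mul (hp2 t).continuous).intervalIntegrable _ _)
      (((hp1 t).continuous.mul (isPoly_tder hp2 hd2 t).continuous).intervalIntegrable _ _),
      integral_decomp₂ (isPoly_tder hp1 hd1 t) (hp2 t) a b,
      integral_decomp₂ (hp1 t) (isPoly_tder hp2 hd2 t) a b,
      ← Finset.sum_add_distrib]
    refine Finset.sum_congr rfl fun i _ => ?_
    rw [← Finset.sum_add_distrib]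
  rw [h1, h2]
  refine HasDerivAt.fun_sum fun i _ => HasDerivAt.fun_sum fun j _ => ?_
  exact ((hd1 (i:ℕ) t).hasDerivAt).mul (((hd2 (j:ℕ) t).hasDerivAt).mul_const _)

lemma ftc_mul {kf kg : ℕ} {f g : ℝ → ℝ} (hf : IsPolyDegLE kf f) (hg : IsPolyDegLE kg g)
    (a b : ℝ) :
    ∫ x in a..b, (deriv f x * g x + f x * deriv g x) = f b * g b - f a * g a := by
  obtain ⟨p, -, hpf⟩ := hf
  obtain ⟨q, -, hqg⟩ := hg
  have hf' : f = fun x => p.eval x := funext hpf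
  have hg' : g = fun x => q.eval x := funext hqg
  subst hf' hg'
  have hdf : deriv (fun x => p.eval x) = fun x => p.derivative.eval x := by
    funext x; exact (p.hasDerivAt x).deriv
  have hdg : deriv (fun x => q.eval x) = fun x => q.derivative.eval x := by
    funext x; exact (q.hasDerivAt x).deriv
  rw [hdf, hdg]
  exact intervalIntegral.integral_deriv_mul_eq_sub_of_hasDerivAt
    (p.continuous.continuousOn) (q.continuous.continuousOn)
    (fun x _ => p.hasDerivAt x) (fun x _ => q.hasDerivAt x)
    (p.derivative.continuous.intervalIntegrable _ _)
    (q.derivative.continuous.intervalIntegrable _ _)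

lemma cont_joint {k : ℕ} {z : ℝ → ℝ → ℝ} (hp : ∀ t, IsPolyDegLE k (z t))
    (hc : ∀ x : ℝ, Continuous (fun t => z t x)) :
    Continuous (fun p : ℝ × ℝ => z p.1 p.2) := by
  have : (fun p : ℝ × ℝ => z p.1 p.2) = fun p : ℝ × ℝ =>
      ∑ i ∈ Finset.range (k+1), z p.1 (i:ℕ) * (ell k i).eval p.2 :=
    funext fun p => poly_decomp (hp p.1) p.2
  rw [this]
  exact continuous_finset_sum _ fun i _ =>
    ((hc (i:ℕ)).comp continuous_fst).mul ((ell k i).continuous.comp continuous_snd)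

lemma cont_joint_tder {k : ℕ} {z : ℝ → ℝ → ℝ} (hp : ∀ t, IsPolyDegLE k (z t))
    (hsm : ∀ x : ℝ, ContDiff ℝ (⊤ : ℕ∞) (fun t => z t x)) :
    Continuous (fun p : ℝ × ℝ => tder z p.1 p.2) := by
  have hd : ∀ x : ℝ, Differentiable ℝ (fun t => z t x) :=
    fun x => (hsm x).differentiable (by simp)
  have : (fun p : ℝ × ℝ => tder z p.1 p.2) = fun p : ℝ × ℝ =>
      ∑ i ∈ Finset.range (k+1), deriv (fun s => z s (i:ℕ)) p.1 * (ell k i).eval p.2 :=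
    funext fun p => tder_eq hp hd p.1 p.2
  rw [this]
  exact continuous_finset_sum _ fun i _ =>
    (((hsm (i:ℕ)).continuous_deriv (by simp)).comp continuous_fst).mul
      ((ell k i).continuous.comp continuous_snd)

lemma hasDerivAt_integral_comp {k : ℕ} {z : ℝ → ℝ → ℝ}
    (hp : ∀ t, IsPolyDegLE k (z t)) (hsm : ∀ x : ℝ, ContDiff ℝ (⊤ : ℕ∞) (fun t => z t x))
    {V : ℝ → ℝ} (hV : ContDiff ℝ 1 V) (a b t : ℝ) :
    HasDerivAt (fun s => ∫ x in a..b, V (z s x))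
      (∫ x in a..b, deriv V (z t x) * tder z t x) t := by
  have hd : ∀ x : ℝ, Differentiable ℝ (fun t => z t x) :=
    fun x => (hsm x).differentiable (by simp)
  have hc : ∀ x : ℝ, Continuous (fun t => z t x) := fun x => (hd x).continuous
  have hF'c : Continuous (fun p : ℝ × ℝ => deriv V (z p.1 p.2) * tder z p.1 p.2) :=
    ((hV.continuous_deriv le_rfl).comp (cont_joint hp hc)).mul (cont_joint_tder hp hsm)
  obtain ⟨M, hM⟩ := (((isCompact_Icc (a := t-1) (b := t+1)).prod
    (isCompact_uIcc (a := a) (b := b)))).exists_bound_of_continuousOn hF'c.continuousOn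
  have key := intervalIntegral.hasDerivAt_integral_of_dominated_loc_of_deriv_le
    (F := fun s x => V (z s x)) (F' := fun s x => deriv V (z s x) * tder z s x)
    (bound := fun _ => M) (a := a) (b := b) (x₀ := t) (s := Metric.ball t 1) (μ := volume) (Metric.ball_mem_nhds t one_pos)
    (Filter.Eventually.of_forall fun s =>
      ((hV.continuous.comp (hp s).continuous)).aestronglyMeasurable)
    ((hV.continuous.comp (hp t).continuous).intervalIntegrable a b)
    ((((hV.continuous_deriv le_rfl).comp (hp t).continuous).mul
      (isPoly_tder hp hd t).continuous).aestronglyMeasurable)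
    (Filter.Eventually.of_forall fun x => fun hx s hs => by
      have hs' : s ∈ Set.Icc (t-1) (t+1) := by
        rw [Metric.mem_ball, Real.dist_eq] at hs
        constructor <;> [linarith [abs_lt.mp hs]; linarith [abs_lt.mp hs]]
      exact hM (s, x) ⟨hs', Set.uIoc_subset_uIcc hx⟩)
    (intervalIntegrable_const)
    (Filter.Eventually.of_forall fun x => fun _ s _ => by
      exact HasDerivAt.comp s ((hV.differentiable one_ne_zero (z s x)).hasDerivAt)
        ((hd x s).hasDerivAt))
  exact key.2

lemma succ_lidx {N j : ℕ} (hN : 0 < N) (hj : j < N) : (lidx N j + 1) % N = j := by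
  unfold lidx
  have h1 : j + N - 1 = j + (N - 1) := by omega
  rw [h1, Nat.mod_add_mod]
  have h2 : j + (N - 1) + 1 = j + N := by omega
  rw [h2, Nat.add_mod_right]
  exact Nat.mod_eq_of_lt hj

lemma lidx_succ {N i : ℕ} (hN : 0 < N) (hi : i < N) : lidx N ((i + 1) % N) = i := by
  unfold lidx
  have h1 : (i + 1) % N + N - 1 = (i + 1) % N + (N - 1) := by
    have := Nat.mod_lt (i+1) hN; omega
  rw [h1, Nat.mod_add_mod]
  have h2 : i + 1 + (N - 1) = i + N := by omega
  rw [h2, Nat.add_mod_right]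
  exact Nat.mod_eq_of_lt hi

lemma lidx_lt {N : ℕ} (hN : 0 < N) (j : ℕ) : lidx N j < N := Nat.mod_lt _ hN

lemma sum_lidx {N : ℕ} (hN : 0 < N) (G : ℕ → ℝ) :
    ∑ j ∈ Finset.range N, G (lidx N j) = ∑ i ∈ Finset.range N, G i := by
  refine Finset.sum_nbij' (fun j => lidx N j) (fun i => (i + 1) % N) ?_ ?_ ?_ ?_ ?_
  · intro a ha; exact Finset.mem_range.mpr (lidx_lt hN a)
  · intro a ha; exact Finset.mem_range.mpr (Nat.mod_lt _ hN)
  · intro a ha; exact succ_lidx hN (Finset.mem_range.mp ha)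
  · intro a ha; exact lidx_succ hN (Finset.mem_range.mp ha)
  · intro a ha; rfl

lemma trRs_lidx {N : ℕ} (hN : 0 < N) {j : ℕ} (hj : j < N) (xs : ℕ → ℝ)
    (z : ℕ → ℝ → ℝ → ℝ) (t : ℝ) : trRs N xs z (lidx N j) t = z j t (xs j) := by
  rw [trRs, succ_lidx hN hj]

/-- The time-derivative mesh function. -/
noncomputable def mts (z : ℕ → ℝ → ℝ → ℝ) : ℕ → ℝ → ℝ → ℝ := fun j t x => tder (z j) t x

lemma hasDerivAt_jmps {N k : ℕ} (hN : 0 < N) (xs : ℕ → ℝ) {z : ℕ → ℝ → ℝ → ℝ}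
    (hz : IsMeshFunS N k z) {j : ℕ} (hj : j < N) (t : ℝ) :
    HasDerivAt (fun s => jmps N xs z j s) (jmps N xs (mts z) j t) t := by
  have h1 : (j + 1) % N < N := Nat.mod_lt _ hN
  have d1 : Differentiable ℝ (fun s => z ((j+1) % N) s (xs ((j+1) % N))) :=
    (hz.2 _ h1 _).differentiable (by simp)
  have d2 : Differentiable ℝ (fun s => z j s (xs (j+1))) :=
    (hz.2 _ hj _).differentiable (by simp)
  have := ((d1 t).hasDerivAt).fun_sub ((d2 t).hasDerivAt)
  simpa [jmps, trRs, trLs, mts, tder] using this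

lemma hasDerivAt_avgs {N k : ℕ} (hN : 0 < N) (xs : ℕ → ℝ) {z : ℕ → ℝ → ℝ → ℝ}
    (hz : IsMeshFunS N k z) {j : ℕ} (hj : j < N) (t : ℝ) :
    HasDerivAt (fun s => avgs N xs z j s) (avgs N xs (mts z) j t) t := by
  have h1 : (j + 1) % N < N := Nat.mod_lt _ hN
  have d1 : Differentiable ℝ (fun s => z ((j+1) % N) s (xs ((j+1) % N))) :=
    (hz.2 _ h1 _).differentiable (by simp)
  have d2 : Differentiable ℝ (fun s => z j s (xs (j+1))) :=
    (hz.2 _ hj _).differentiable (by simp)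
  have := (((d1 t).hasDerivAt).fun_add ((d2 t).hasDerivAt)).div_const 2
  simpa [avgs, trRs, trLs, mts, tder] using this

lemma isPoly_deriv_continuous {k : ℕ} {f : ℝ → ℝ} (hf : IsPolyDegLE k f) :
    Continuous (deriv f) := by
  obtain ⟨p, -, hp⟩ := hf
  have : f = fun x => p.eval x := funext hp
  subst this
  have : deriv (fun x => p.eval x) = fun x => p.derivative.eval x := by
    funext x; exact (p.hasDerivAt x).deriv
  rw [this]; exact p.derivative.continuous

lemma cell_split {f g h : ℝ → ℝ} (hf : Continuous f) (hg : Continuous g)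
    (hh : Continuous h) (a b : ℝ) :
    ∫ x in a..b, ((1/2) * ((f x)^2 + (g x)^2) - h x)
      = (1/2) * (∫ x in a..b, f x * f x) + (1/2) * (∫ x in a..b, g x * g x)
        - ∫ x in a..b, h x := by
  have i1 : IntervalIntegrable (fun x => (1/2 : ℝ) * (f x * f x)) volume a b :=
    (continuous_const.mul (hf.mul hf)).intervalIntegrable _ _
  have i2 : IntervalIntegrable (fun x => (1/2 : ℝ) * (g x * g x)) volume a b :=
    (continuous_const.mul (hg.mul hg)).intervalIntegrable _ _
  calc ∫ x in a..b, ((1/2) * ((f x)^2 + (g x)^2) - h x)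
      = ∫ x in a..b, ((1/2) * (f x * f x) + (1/2) * (g x * g x) - h x) := by
        apply intervalIntegral.integral_congr; intro x _
        show (1/2) * ((f x)^2 + (g x)^2) - h x = _; ring
    _ = (∫ x in a..b, ((1/2) * (f x * f x) + (1/2) * (g x * g x))) - ∫ x in a..b, h x := by
        exact intervalIntegral.integral_sub (i1.add i2) (hh.intervalIntegrable _ _)
    _ = _ := by
        rw [intervalIntegral.integral_add i1 i2,
          intervalIntegral.integral_const_mul, intervalIntegral.integral_const_mul]

/-- Energy conservation of the semi-discrete DG scheme for the Hamiltonian wave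
equation `u_tt − u_xx = V'(u)` with the family of numerical fluxes
`ŵ = {w} + α₁₁[u] + α₁₃[w] − β∂ₜ[v]`, `v̂ = β∂ₜ[u]`, `û = {u} − α₁₃[u] − α₃₃[w]`. -/
theorem stmt11 {N k : ℕ} (hN : 0 < N)
    (xs : ℕ → ℝ) (hxs : ∀ i < N, xs i < xs (i+1))
    (a11 a13 a33 b : ℝ)
    (V : ℝ → ℝ) (hV : ContDiff ℝ 1 V)
    (u v w : ℕ → ℝ → ℝ → ℝ)
    (hu : IsMeshFunS N k u) (hv : IsMeshFunS N k v) (hw : IsMeshFunS N k w)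
    (ha : ∀ j < N, ∀ t : ℝ, ∀ φ : ℝ → ℝ, IsPolyDegLE k φ →
      -(∫ x in (xs j)..(xs (j+1)), deriv (fun s => v j s x) t * φ x)
        - (∫ x in (xs j)..(xs (j+1)), w j t x * deriv φ x)
        + (avgs N xs w j t + a11 * jmps N xs u j t + a13 * jmps N xs w j t
            - b * deriv (fun s => jmps N xs v j s) t) * φ (xs (j+1))
        - (avgs N xs w (lidx N j) t + a11 * jmps N xs u (lidx N j) t
            + a13 * jmps N xs w (lidx N j) t
            - b * deriv (fun s => jmps N xs v (lidx N j) s) t) * φ (xs j)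
      = -(∫ x in (xs j)..(xs (j+1)), deriv V (u j t x) * φ x))
    (hb : ∀ j < N, ∀ t : ℝ, ∀ φ : ℝ → ℝ, IsPolyDegLE k φ →
      (∫ x in (xs j)..(xs (j+1)), deriv (fun s => u j s x) t * φ x)
        + (b * deriv (fun s => jmps N xs u j s) t) * φ (xs (j+1))
        - (b * deriv (fun s => jmps N xs u (lidx N j) s) t) * φ (xs j)
      = ∫ x in (xs j)..(xs (j+1)), v j t x * φ x)
    (hc : ∀ j < N, ∀ t : ℝ, ∀ φ : ℝ → ℝ, IsPolyDegLE k φ →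
      (∫ x in (xs j)..(xs (j+1)), u j t x * deriv φ x)
        - (avgs N xs u j t - a13 * jmps N xs u j t - a33 * jmps N xs w j t) * φ (xs (j+1))
        + (avgs N xs u (lidx N j) t - a13 * jmps N xs u (lidx N j) t
            - a33 * jmps N xs w (lidx N j) t) * φ (xs j)
      = -(∫ x in (xs j)..(xs (j+1)), w j t x * φ x)) :
    ∀ t : ℝ,
      deriv (fun s =>
        (∑ j ∈ Finset.range N, ∫ x in (xs j)..(xs (j+1)),
            ((1/2) * ((v j s x)^2 + (w j s x)^2) - V (u j s x)))
        + (1/2) * ∑ j ∈ Finset.range N,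
            (a11 * (jmps N xs u j s)^2 - a33 * (jmps N xs w j s)^2)) t = 0 := by
  intro t
  -- basic regularity facts
  have hup : ∀ j, j < N → ∀ s : ℝ, IsPolyDegLE k (u j s) := fun j hj s => hu.1 j hj s
  have hvp : ∀ j, j < N → ∀ s : ℝ, IsPolyDegLE k (v j s) := fun j hj s => hv.1 j hj s
  have hwp : ∀ j, j < N → ∀ s : ℝ, IsPolyDegLE k (w j s) := fun j hj s => hw.1 j hj s
  have hud : ∀ j, j < N → ∀ x : ℝ, Differentiable ℝ (fun s => u j s x) :=
    fun j hj x => (hu.2 j hj x).differentiable (by simp)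
  have hvd : ∀ j, j < N → ∀ x : ℝ, Differentiable ℝ (fun s => v j s x) :=
    fun j hj x => (hv.2 j hj x).differentiable (by simp)
  have hwd : ∀ j, j < N → ∀ x : ℝ, Differentiable ℝ (fun s => w j s x) :=
    fun j hj x => (hw.2 j hj x).differentiable (by simp)
  have hjd : ∀ (z : ℕ → ℝ → ℝ → ℝ), IsMeshFunS N k z → ∀ i, i < N →
      deriv (fun s => jmps N xs z i s) t = jmps N xs (mts z) i t :=
    fun z hz i hi => (hasDerivAt_jmps hN xs hz hi t).deriv
  -- Step A : derivative of the energy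
  have hE : HasDerivAt (fun s =>
      (∑ j ∈ Finset.range N, ∫ x in (xs j)..(xs (j+1)),
          ((1/2) * ((v j s x)^2 + (w j s x)^2) - V (u j s x)))
      + (1/2) * ∑ j ∈ Finset.range N,
          (a11 * (jmps N xs u j s)^2 - a33 * (jmps N xs w j s)^2))
      ((∑ j ∈ Finset.range N,
        ((∫ x in (xs j)..(xs (j+1)), v j t x * tder (v j) t x)
         + (∫ x in (xs j)..(xs (j+1)), w j t x * tder (w j) t x)
         - ∫ x in (xs j)..(xs (j+1)), deriv V (u j t x) * tder (u j) t x))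
      + (1/2) * ∑ j ∈ Finset.range N,
        (a11 * (2 * jmps N xs u j t * jmps N xs (mts u) j t)
         - a33 * (2 * jmps N xs w j t * jmps N xs (mts w) j t))) t := by
    apply HasDerivAt.add
    · apply HasDerivAt.fun_sum
      intro j hjm
      have hj := Finset.mem_range.mp hjm
      have hre : (fun s => ∫ x in (xs j)..(xs (j+1)),
            ((1/2) * ((v j s x)^2 + (w j s x)^2) - V (u j s x)))
          = fun s => (1/2) * (∫ x in (xs j)..(xs (j+1)), v j s x * v j s x)
              + (1/2) * (∫ x in (xs j)..(xs (j+1)), w j s x * w j s x)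
              - ∫ x in (xs j)..(xs (j+1)), V (u j s x) :=
        funext fun s => cell_split (hvp j hj s).continuous (hwp j hj s).continuous
          (hV.continuous.comp (hup j hj s).continuous) _ _
      rw [hre]
      have h1 := hasDerivAt_integral_mul₂ (hvp j hj) (hvd j hj) (hvp j hj) (hvd j hj)
        (xs j) (xs (j+1)) t
      have h2 := hasDerivAt_integral_mul₂ (hwp j hj) (hwd j hj) (hwp j hj) (hwd j hj)
        (xs j) (xs (j+1)) t
      have h3 := hasDerivAt_integral_comp (hup j hj) (hu.2 j hj) hV (xs j) (xs (j+1)) t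
      have hcomb := ((h1.const_mul (1/2 : ℝ)).fun_add (h2.const_mul (1/2 : ℝ))).fun_sub h3
      have e1 : (∫ x in (xs j)..(xs (j+1)),
            (tder (v j) t x * v j t x + v j t x * tder (v j) t x))
          = 2 * ∫ x in (xs j)..(xs (j+1)), v j t x * tder (v j) t x := by
        rw [← intervalIntegral.integral_const_mul]
        apply intervalIntegral.integral_congr
        intro x _
        show tder (v j) t x * v j t x + v j t x * tder (v j) t x = _
        ring
      have e2 : (∫ x in (xs j)..(xs (j+1)),
            (tder (w j) t x * w j t x + w j t x * tder (w j) t x))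
          = 2 * ∫ x in (xs j)..(xs (j+1)), w j t x * tder (w j) t x := by
        rw [← intervalIntegral.integral_const_mul]
        apply intervalIntegral.integral_congr
        intro x _
        show tder (w j) t x * w j t x + w j t x * tder (w j) t x = _
        ring
      rw [e1, e2] at hcomb
      have : (∫ x in (xs j)..(xs (j+1)), v j t x * tder (v j) t x)
           + (∫ x in (xs j)..(xs (j+1)), w j t x * tder (w j) t x)
           - (∫ x in (xs j)..(xs (j+1)), deriv V (u j t x) * tder (u j) t x)
          = (1/2) * (2 * ∫ x in (xs j)..(xs (j+1)), v j t x * tder (v j) t x)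
            + (1/2) * (2 * ∫ x in (xs j)..(xs (j+1)), w j t x * tder (w j) t x)
            - ∫ x in (xs j)..(xs (j+1)), deriv V (u j t x) * tder (u j) t x := by ring
      rw [this]
      exact hcomb
    · apply HasDerivAt.const_mul
      apply HasDerivAt.fun_sum
      intro j hjm
      have hj := Finset.mem_range.mp hjm
      have h1 := (hasDerivAt_jmps hN xs hu hj t).pow (n := 2)
      have h2 := (hasDerivAt_jmps hN xs hw hj t).pow (n := 2)
      have hcomb := (h1.const_mul a11).fun_sub (h2.const_mul a33)
      have : a11 * (2 * jmps N xs u j t * jmps N xs (mts u) j t)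
           - a33 * (2 * jmps N xs w j t * jmps N xs (mts w) j t)
          = a11 * ((2 : ℕ) * jmps N xs u j t ^ (2-1) * jmps N xs (mts u) j t)
            - a33 * ((2 : ℕ) * jmps N xs w j t ^ (2-1) * jmps N xs (mts w) j t) := by
        norm_num
      rw [this]
      exact hcomb
  rw [hE.deriv]
  rw [Finset.mul_sum, ← Finset.sum_add_distrib]
  -- interface quantities
  set Gf : ℕ → ℝ := fun i =>
    b * jmps N xs (mts u) i t * trLs xs (mts v) i t
    + (avgs N xs (mts u) i t - a13 * jmps N xs (mts u) i t - a33 * jmps N xs (mts w) i t)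
        * trLs xs w i t
    - trLs xs (mts u) i t * trLs xs w i t
    + (avgs N xs w i t + a11 * jmps N xs u i t + a13 * jmps N xs w i t
        - b * jmps N xs (mts v) i t) * trLs xs (mts u) i t
    + a11 * jmps N xs u i t * jmps N xs (mts u) i t
    - a33 * jmps N xs w i t * jmps N xs (mts w) i t with hGf
  set Hf : ℕ → ℝ := fun i =>
    -(b * jmps N xs (mts u) i t) * trRs N xs (mts v) i t
    - (avgs N xs (mts u) i t - a13 * jmps N xs (mts u) i t - a33 * jmps N xs (mts w) i t)
        * trRs N xs w i t
    + trRs N xs (mts u) i t * trRs N xs w i t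
    - (avgs N xs w i t + a11 * jmps N xs u i t + a13 * jmps N xs w i t
        - b * jmps N xs (mts v) i t) * trRs N xs (mts u) i t with hHf
  have key : ∀ j ∈ Finset.range N,
      ((∫ x in (xs j)..(xs (j+1)), v j t x * tder (v j) t x)
       + (∫ x in (xs j)..(xs (j+1)), w j t x * tder (w j) t x)
       - ∫ x in (xs j)..(xs (j+1)), deriv V (u j t x) * tder (u j) t x)
      + (1/2) * (a11 * (2 * jmps N xs u j t * jmps N xs (mts u) j t)
         - a33 * (2 * jmps N xs w j t * jmps N xs (mts w) j t))
      = Gf j + Hf (lidx N j) := by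
    intro j hjm
    have hj := Finset.mem_range.mp hjm
    have hl := lidx_lt hN j
    -- test functions
    have hφu : IsPolyDegLE k (tder (u j) t) := isPoly_tder (hup j hj) (hud j hj) t
    have hφv : IsPolyDegLE k (tder (v j) t) := isPoly_tder (hvp j hj) (hvd j hj) t
    -- E1 : from (b) with φ = ∂ₜ v
    have E1 := hb j hj t (tder (v j) t) hφv
    rw [hjd u hu j hj, hjd u hu (lidx N j) hl] at E1
    -- E3 : from (a) with φ = ∂ₜ u
    have E3 := ha j hj t (tder (u j) t) hφu
    rw [hjd v hv j hj, hjd v hv (lidx N j) hl] at E3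
    -- E2 : time derivative of (c) with φ = w(t)
    have E2 : (∫ x in (xs j)..(xs (j+1)), tder (u j) t x * deriv (w j t) x)
        - (avgs N xs (mts u) j t - a13 * jmps N xs (mts u) j t
            - a33 * jmps N xs (mts w) j t) * (w j t (xs (j+1)))
        + (avgs N xs (mts u) (lidx N j) t - a13 * jmps N xs (mts u) (lidx N j) t
            - a33 * jmps N xs (mts w) (lidx N j) t) * (w j t (xs j))
        = -(∫ x in (xs j)..(xs (j+1)), tder (w j) t x * w j t x) := by
      have hwcont : Continuous (deriv (w j t)) := isPoly_deriv_continuous (hwp j hj t)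
      have p1 := hasDerivAt_integral_mul_right (hup j hj) (hud j hj) hwcont
        (xs j) (xs (j+1)) t
      have p2 := (((hasDerivAt_avgs hN xs hu hj t).fun_sub
        ((hasDerivAt_jmps hN xs hu hj t).const_mul a13)).fun_sub
        ((hasDerivAt_jmps hN xs hw hj t).const_mul a33)).mul_const (w j t (xs (j+1)))
      have p3 := (((hasDerivAt_avgs hN xs hu hl t).fun_sub
        ((hasDerivAt_jmps hN xs hu hl t).const_mul a13)).fun_sub
        ((hasDerivAt_jmps hN xs hw hl t).const_mul a33)).mul_const (w j t (xs j))
      have hLHS := (p1.fun_sub p2).fun_add p3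
      have p4 := (hasDerivAt_integral_mul_right (hwp j hj) (hwd j hj)
        (hwp j hj t).continuous (xs j) (xs (j+1)) t).fun_neg
      have hfe : (fun s =>
          (∫ x in (xs j)..(xs (j+1)), u j s x * deriv (w j t) x)
          - (avgs N xs u j s - a13 * jmps N xs u j s - a33 * jmps N xs w j s)
              * (w j t (xs (j+1)))
          + (avgs N xs u (lidx N j) s - a13 * jmps N xs u (lidx N j) s
              - a33 * jmps N xs w (lidx N j) s) * (w j t (xs j)))
          = fun s => -(∫ x in (xs j)..(xs (j+1)), w j s x * w j t x) :=
        funext fun s => hc j hj s (w j t) (hwp j hj t)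
      rw [hfe] at hLHS
      exact hLHS.unique p4
    -- commutation identities
    have EC : (∫ x in (xs j)..(xs (j+1)), deriv (fun s => u j s x) t * tder (v j) t x)
        = ∫ x in (xs j)..(xs (j+1)), deriv (fun s => v j s x) t * tder (u j) t x := by
      apply intervalIntegral.integral_congr
      intro x _
      show deriv (fun s => u j s x) t * tder (v j) t x = _
      simp only [tder]
      ring
    have ECw : (∫ x in (xs j)..(xs (j+1)), tder (w j) t x * w j t x)
        = ∫ x in (xs j)..(xs (j+1)), w j t x * tder (w j) t x := by
      apply intervalIntegral.integral_congr
      intro x _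
      show tder (w j) t x * w j t x = _
      ring
    -- FTC
    have EF : (∫ x in (xs j)..(xs (j+1)), w j t x * deriv (tder (u j) t) x)
        + (∫ x in (xs j)..(xs (j+1)), tder (u j) t x * deriv (w j t) x)
        = tder (u j) t (xs (j+1)) * w j t (xs (j+1)) - tder (u j) t (xs j) * w j t (xs j) := by
      have hint1 : IntervalIntegrable (fun x => deriv (tder (u j) t) x * w j t x)
          volume (xs j) (xs (j+1)) :=
        ((isPoly_deriv_continuous hφu).mul (hwp j hj t).continuous).intervalIntegrable _ _
      have hint2 : IntervalIntegrable (fun x => tder (u j) t x * deriv (w j t) x)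
          volume (xs j) (xs (j+1)) :=
        (hφu.continuous.mul (isPoly_deriv_continuous (hwp j hj t))).intervalIntegrable _ _
      have hF := ftc_mul hφu (hwp j hj t) (xs j) (xs (j+1))
      rw [intervalIntegral.integral_add hint1 hint2] at hF
      have hcm : (∫ x in (xs j)..(xs (j+1)), deriv (tder (u j) t) x * w j t x)
          = ∫ x in (xs j)..(xs (j+1)), w j t x * deriv (tder (u j) t) x := by
        apply intervalIntegral.integral_congr
        intro x _
        show deriv (tder (u j) t) x * w j t x = _
        ring
      rw [hcm] at hF
      linarith [hF]
    -- traces at the left interface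
    simp only [hGf, hHf, jmps, avgs, trLs, trRs, mts, tder, succ_lidx hN hj] at *
    linear_combination (-1 : ℝ) * E1 - E3 + E2 + EC - ECw - EF
  rw [Finset.sum_congr rfl key, Finset.sum_add_distrib, sum_lidx hN Hf,
    ← Finset.sum_add_distrib]
  apply Finset.sum_eq_zero
  intro i him
  have hi := Finset.mem_range.mp him
  simp only [hGf, hHf, jmps, avgs, trLs, trRs]
  ring
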